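/- Let N = 4L+1. Define w_n = u_n + N^{-1/2} S(2L+2n) u_{-n} for 0 ≤ n ≤ L, where u_n(k) = S(3L+n+k)S(3L+n-k). Then each w_n is an eigenvector of the centered DFT F with eigenvalue 1, and the w_n (0 ≤ n ≤ L) are linearly independent; hence the eigenspace of F for eigenvalue 1 has dimension at least L+1. -/

import Mathlib

open scoped Real BigOperators

/-- `S N k = ∏_{j=1}^{k} 2 sin(π j / N)`, with `S N 0 = 1` (empty product);
note `S N k = 0` for `k ≥ N`. -/
noncomputable def S (N : ℕ) (k : ℕ) : ℝ :=
  ∏ j ∈ Finset.Icc 1 k, 2 * Real.sin (Real.pi * j / N)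

/-- The index set `I_N = {-M+1, ..., -M+N}` with `M = ⌊(N+1)/2⌋`.
For `N = 4L+1` this is `{-2L, ..., 2L}`. -/
noncomputable def Iset (N : ℕ) : Finset ℤ :=
  Finset.Icc (1 - (((N + 1) / 2 : ℕ) : ℤ)) ((N : ℤ) - (((N + 1) / 2 : ℕ) : ℤ))

/-- The centered discrete Fourier transform. -/
noncomputable def dft (N : ℕ) (u : ℤ → ℂ) (l : ℤ) : ℂ :=
  (Real.sqrt N : ℂ)⁻¹ *
    ∑ k ∈ Iset N, Complex.exp (-2 * Real.pi * Complex.I * k * l / N) * u k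

/-- The even vectors `u_n(k) = S(3L+n+k) S(3L+n-k)` (for `N = 4L+1`). -/
noncomputable def uvec (L : ℕ) (n k : ℤ) : ℝ :=
  S (4 * L + 1) (3 * L + n + k).toNat * S (4 * L + 1) (3 * L + n - k).toNat

/-- The odd vectors `v_n(k) = sin(2πk/N) S(3L+n+k) S(3L+n-k)` (for `N = 4L+1`). -/
noncomputable def vvec (L : ℕ) (n k : ℤ) : ℝ :=
  Real.sin (2 * Real.pi * k / (4 * L + 1)) * uvec L n k
/-- The centered DFT as a linear operator on `ℂ^N` (functions on `I_N`). -/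
noncomputable def Fop (N : ℕ) :
    ({k : ℤ // k ∈ Iset N} → ℂ) →ₗ[ℂ] ({k : ℤ // k ∈ Iset N} → ℂ) where
  toFun u l := (Real.sqrt N : ℂ)⁻¹ *
    ∑ k : {k : ℤ // k ∈ Iset N},
      Complex.exp (-2 * Real.pi * Complex.I * k.1 * l.1 / N) * u k
  map_add' u v := by
    funext l
    simp only [Pi.add_apply, mul_add, Finset.sum_add_distrib]
  map_smul' c u := by
    funext l
    simp only [Pi.smul_apply, smul_eq_mul, RingHom.id_apply]
    rw [Finset.mul_sum, Finset.mul_sum, Finset.mul_sum]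
    exact Finset.sum_congr rfl fun k _ => by ring

/-- `w_n = u_n + N^{-1/2} S(2L+2n) u_{-n}`. -/
noncomputable def wvec (L : ℕ) (n k : ℤ) : ℝ :=
  uvec L n k + (Real.sqrt (4 * L + 1))⁻¹ * S (4 * L + 1) (2 * L + 2 * n).toNat * uvec L (-n) k

/-!
Put `ζ = e^{iπ/N}` (`zeta N`) and `T(z) = ∏_{j=1}^{z} (ζ^j - ζ^{-j})` (`chordProd N z`), so
that `S(M) = (-i)^M T(M)`. As `ζ^j - ζ^{-j} = -ζ^{-j}(1 - ζ^{2j})`, `T(M)` is the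
`q`-Pochhammer symbol `(q; q)_M` with `q = ζ²` up to a power of `ζ`, and reflecting `j ↦ N - j`
gives `T(z) T(N-1-z) = T(N-1) = N`. Hence each product `T(4L-m+k) T(4L-m-k)` in `u_n`
(`m = L - n`) is, up to a power of `ζ`, `N²` over `(q; q)_{m-k} (q; q)_{m+k}`, i.e. a Gaussian
binomial coefficient `[2m, m+k]_q` up to the common factor `(q; q)_{2m}`. The `q`-binomial
theorem sums the DFT of these into a product of factors `1 + ζ^{N-2s} = ζ^{-s}(ζ^s - ζ^{-s})`,
which is again a quotient of values of `T`; the outcome is `F u_n = N^{-1/2} S(2L+2n) u_{-n}`,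
and `S(2L+2n) S(2L-2n) = N` then makes `w_n` a fixed vector. Finally `w_j(L+i)` vanishes for
`j < i` and is positive for `j = i`, so the `w_n` are linearly independent.
-/

open Finset

namespace CenteredDFT

section QBinomial

variable {R : Type*} [CommRing R]

def qBinom (q : R) : ℕ → ℕ → R
  | 0, 0 => 1
  | 0, _ + 1 => 0
  | M + 1, 0 => qBinom q M 0
  | M + 1, k + 1 => qBinom q M (k + 1) + q ^ (M - k) * qBinom q M k

lemma qBinom_zero_right (q : R) (M : ℕ) : qBinom q M 0 = 1 := by
  induction M with
  | zero => rfl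
  | succ M ih => rw [qBinom, ih]

lemma qBinom_eq_zero_of_lt (q : R) {M k : ℕ} (h : M < k) : qBinom q M k = 0 := by
  induction M generalizing k with
  | zero => obtain ⟨k, rfl⟩ := Nat.exists_eq_succ_of_ne_zero (by omega : k ≠ 0); rfl
  | succ M ih =>
    obtain ⟨k, rfl⟩ := Nat.exists_eq_succ_of_ne_zero (by omega : k ≠ 0)
    rw [qBinom, ih (by omega), ih (by omega), mul_zero, add_zero]

lemma qBinom_succ_succ (q : R) (M k : ℕ) :
    qBinom q (M + 1) (k + 1) = qBinom q M (k + 1) + q ^ (M - k) * qBinom q M k := rfl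

theorem prod_one_add_mul_pow_eq_sum_qBinom (q x : R) (M : ℕ) :
    ∏ j ∈ range M, (1 + x * q ^ j) =
      ∑ k ∈ range (M + 1), qBinom q M k * q ^ k.choose 2 * x ^ k := by
  induction M with
  | zero => simp [qBinom]
  | succ M ih =>
    have shift : ∀ k ∈ range (M + 1), x * q ^ M * (qBinom q M k * q ^ k.choose 2 * x ^ k) =
        q ^ (M - k) * qBinom q M k * q ^ (k + 1).choose 2 * x ^ (k + 1) := by
      intro k hk
      have hqk : q ^ M = q ^ (M - k) * q ^ k := by
        rw [← pow_add, Nat.sub_add_cancel (by simpa [Nat.lt_succ_iff] using hk)]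
      rw [Nat.choose_succ_succ', Nat.choose_one_right, hqk]
      ring
    rw [prod_range_succ, ih, mul_add, mul_one, mul_comm _ (x * q ^ M), mul_sum,
      sum_congr rfl shift, sum_range_succ' _ (M + 1)]
    simp only [qBinom_succ_succ, add_mul, sum_add_distrib, qBinom_zero_right]
    rw [sum_range_succ (fun k => qBinom q M (k + 1) * _ * _) M,
      qBinom_eq_zero_of_lt q (Nat.lt_succ_self M), sum_range_succ' _ M, qBinom_zero_right]
    ring

def qPoch (q : R) (M : ℕ) : R := ∏ j ∈ range M, (1 - q ^ (j + 1))

lemma qPoch_zero (q : R) : qPoch q 0 = 1 := by simp [qPoch]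

lemma qPoch_succ (q : R) (M : ℕ) : qPoch q (M + 1) = qPoch q M * (1 - q ^ (M + 1)) :=
  prod_range_succ _ _

lemma qBinom_mul_qPoch_mul_qPoch (q : R) {M k : ℕ} (hk : k ≤ M) :
    qBinom q M k * (qPoch q k * qPoch q (M - k)) = qPoch q M := by
  induction M generalizing k with
  | zero =>
    obtain rfl : k = 0 := by omega
    simp [qBinom, qPoch]
  | succ M ih =>
    rcases k with _ | k
    · simp [qBinom_zero_right, qPoch_zero]
    rcases hk.lt_or_eq with hlt | heq
    · obtain ⟨d, hd⟩ : ∃ d, M - k = d + 1 := ⟨M - k - 1, by omega⟩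
      have h1 := ih (k := k + 1) (by omega)
      have h2 := ih (k := k) (by omega)
      have hq : q ^ (d + 1) * q ^ (k + 1) = q ^ (M + 1) := by rw [← pow_add]; congr 1; omega
      rw [show M - (k + 1) = d by omega, qPoch_succ q k] at h1
      rw [hd, qPoch_succ q d] at h2
      rw [show M + 1 - (k + 1) = d + 1 by omega, qBinom_succ_succ, hd, qPoch_succ q k,
        qPoch_succ q d, qPoch_succ q M]
      linear_combination (1 - q ^ (d + 1)) * h1 + q ^ (d + 1) * (1 - q ^ (k + 1)) * h2 -
        qPoch q M * hq
    · obtain rfl : k = M := by omega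
      have h := ih (le_refl k)
      rw [Nat.sub_self, qPoch_zero] at h
      rw [qBinom_succ_succ, qBinom_eq_zero_of_lt q (Nat.lt_succ_self k), Nat.sub_self,
        Nat.sub_self, qPoch_zero, qPoch_succ]
      linear_combination (1 - q ^ (k + 1)) * h

end QBinomial

lemma two_mul_choose_two (n : ℕ) : 2 * ((n.choose 2 : ℕ) : ℤ) = n * (n - 1) := by
  induction n with
  | zero => simp
  | succ n ih =>
    rw [Nat.choose_succ_succ', Nat.choose_one_right]
    push_cast at ih ⊢
    linear_combination ih

lemma sum_Icc_neg_eq_sum_range {M : Type*} [AddCommMonoid M] (m : ℕ) (f : ℤ → M) :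
    ∑ k ∈ Icc (-(m : ℤ)) m, f k = ∑ j ∈ range (2 * m + 1), f (j - m) := by
  refine sum_nbij' (fun k => (k + m).toNat) (fun j => j - m) ?_ ?_ ?_ ?_ ?_
  all_goals intro a ha
  all_goals simp only [mem_Icc, mem_range] at ha
  · simp only [mem_range]; omega
  · simp only [mem_Icc]; omega
  · omega
  · omega
  · congr 1; omega

lemma prod_Ioc_eq_prod_range {M : Type*} [CommMonoid M] (c : ℤ) (n : ℕ) (f : ℤ → M) :
    ∏ s ∈ Ioc c (c + n), f s = ∏ j ∈ range n, f (c + n - j) := by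
  refine prod_nbij' (fun s => (c + n - s).toNat) (fun j => c + n - j) ?_ ?_ ?_ ?_ ?_
  all_goals intro a ha
  all_goals simp only [mem_Ioc, mem_range] at ha
  · simp only [mem_range]; omega
  · simp only [mem_Ioc]; omega
  · omega
  · omega
  · congr 1; omega

section Chords

open Complex

variable (N : ℕ)

noncomputable def zeta : ℂ := exp (π * I / N)

lemma zeta_ne_zero : zeta N ≠ 0 := exp_ne_zero _

lemma zeta_zpow_add (a b : ℤ) : zeta N ^ (a + b) = zeta N ^ a * zeta N ^ b :=
  zpow_add₀ (zeta_ne_zero N) a b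

lemma zeta_zpow (a : ℤ) : zeta N ^ a = exp (a * (π * I / N)) :=
  (exp_int_mul _ a).symm

lemma exp_eq_zeta_zpow (k l : ℤ) : exp (-2 * π * I * k * l / N) = zeta N ^ (-(2 * k * l)) := by
  rw [zeta_zpow]
  push_cast
  ring_nf

variable {N}

lemma zeta_zpow_self (hN : N ≠ 0) : zeta N ^ (N : ℤ) = -1 := by
  rw [zeta_zpow, Int.cast_natCast, mul_div_cancel₀ _ (Nat.cast_ne_zero.mpr hN), exp_pi_mul_I]

lemma zeta_zpow_self_mul (hN : N ≠ 0) (t : ℤ) : zeta N ^ ((N : ℤ) * t) = (-1) ^ t := by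
  rw [zpow_mul, zeta_zpow_self hN]

lemma isPrimitiveRoot_zeta_sq (hN : N ≠ 0) : IsPrimitiveRoot (zeta N ^ 2) N := by
  convert isPrimitiveRoot_exp N hN using 1
  rw [zeta, ← exp_nat_mul]
  ring_nf

variable (N)

noncomputable def chord (j : ℤ) : ℂ := zeta N ^ j - zeta N ^ (-j)

lemma chord_zero : chord N 0 = 0 := by simp [chord]

lemma neg_I_mul_chord (j : ℤ) : -I * chord N j = ((2 * Real.sin (π * j / N) : ℝ) : ℂ) := by
  have h1 : (j : ℂ) * (π * I / N) = (π * j / N : ℂ) * I := by ring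
  have h2 : ((-j : ℤ) : ℂ) * (π * I / N) = (-(π * j / N) : ℂ) * I := by push_cast; ring
  rw [chord, zeta_zpow, zeta_zpow, h1, h2, exp_mul_I, exp_mul_I, cos_neg, sin_neg]
  push_cast
  linear_combination (-2 * sin (π * j / N)) * I_mul_I

lemma chord_eq_neg_zpow_mul (j : ℤ) : chord N j = -zeta N ^ (-j) * (1 - (zeta N ^ 2) ^ j) := by
  have h : zeta N ^ (-j) * (zeta N ^ 2) ^ j = zeta N ^ j := by
    rw [← zpow_natCast, ← zpow_mul, ← zeta_zpow_add]; congr 1; push_cast; ring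
  rw [chord]
  linear_combination -h

variable {N}

lemma zeta_zpow_self_add (hN : N ≠ 0) (a : ℤ) : zeta N ^ ((N : ℤ) + a) = -zeta N ^ a := by
  rw [zeta_zpow_add, zeta_zpow_self hN, neg_one_mul]

lemma zeta_zpow_neg_self_add (hN : N ≠ 0) (a : ℤ) : zeta N ^ (-(N : ℤ) + a) = -zeta N ^ a := by
  have h := zeta_zpow_self_add hN (-(N : ℤ) + a)
  rw [add_neg_cancel_left] at h
  rw [h, neg_neg]

lemma chord_self (hN : N ≠ 0) : chord N N = 0 := by
  rw [chord, ← add_zero (N : ℤ), zeta_zpow_self_add hN, neg_add, neg_zero,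
    zeta_zpow_neg_self_add hN, sub_self]

lemma chord_self_sub (hN : N ≠ 0) (j : ℤ) : chord N (N - j) = chord N j := by
  rw [chord, chord, sub_eq_add_neg (N : ℤ), neg_add, neg_neg, zeta_zpow_self_add hN,
    zeta_zpow_neg_self_add hN]
  ring

lemma one_add_zeta_zpow_self_sub (hN : N ≠ 0) (s : ℤ) :
    1 + zeta N ^ ((N : ℤ) - 2 * s) = zeta N ^ (-s) * chord N s := by
  rw [sub_eq_add_neg, zeta_zpow_add, zeta_zpow_self hN, chord, mul_sub, ← zeta_zpow_add,
    ← zeta_zpow_add, neg_add_cancel, zpow_zero, ← two_mul, mul_neg]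
  ring

variable (N)

noncomputable def chordProd (z : ℤ) : ℂ := ∏ j ∈ Ioc 0 z, chord N j

lemma chordProd_mul_prod_Ioc {a b : ℤ} (ha : 0 ≤ a) (hab : a ≤ b) :
    chordProd N a * ∏ j ∈ Ioc a b, chord N j = chordProd N b := by
  rw [chordProd, chordProd, ← Ioc_union_Ioc_eq_Ioc ha hab,
    prod_union (Ioc_disjoint_Ioc_of_le le_rfl)]

lemma chordProd_succ {z : ℤ} (hz : 0 ≤ z) :
    chordProd N (z + 1) = chordProd N z * chord N (z + 1) := by
  have h : Ioc z (z + 1) = {z + 1} := by ext; simp only [mem_Ioc, mem_singleton]; omega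
  rw [← chordProd_mul_prod_Ioc N hz (by omega), h, prod_singleton]

lemma chordProd_natCast (M : ℕ) :
    chordProd N M = (-1) ^ M * zeta N ^ (-((M + 1).choose 2 : ℤ)) * qPoch (zeta N ^ 2) M := by
  induction M with
  | zero => simp [chordProd, qPoch_zero]
  | succ M ih =>
    have hexp :
        -(((M + 1 + 1).choose 2 : ℕ) : ℤ) = -((M + 1).choose 2 : ℤ) + -((M : ℤ) + 1) := by
      rw [Nat.choose_succ_succ' (M + 1), Nat.choose_one_right]; push_cast; ring
    rw [Nat.cast_succ, chordProd_succ N (by positivity), ih, chord_eq_neg_zpow_mul, qPoch_succ,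
      hexp, zeta_zpow_add, ← Nat.cast_succ, zpow_natCast, Nat.succ_eq_add_one]
    ring

lemma S_eq_neg_I_pow_mul_chordProd (M : ℕ) : (S N M : ℂ) = (-I) ^ M * chordProd N M := by
  have hterm : ∀ j ∈ Icc 1 M, ((2 * Real.sin (π * j / N) : ℝ) : ℂ) = -I * chord N j := by
    intro j _
    rw [neg_I_mul_chord]
    push_cast
    rfl
  rw [S, ofReal_prod, prod_congr rfl hterm, prod_mul_distrib, prod_const, Nat.card_Icc,
    Nat.add_sub_cancel, chordProd]
  congr 1
  refine prod_nbij' (fun j => (j : ℤ)) (fun z => z.toNat) ?_ ?_ ?_ ?_ (fun _ _ => rfl)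
  · intro a ha; simp only [mem_Icc, mem_Ioc] at ha ⊢; omega
  · intro a ha; simp only [mem_Icc, mem_Ioc] at ha ⊢; omega
  · intro a _; exact Int.toNat_natCast a
  · intro a ha; simp only [mem_Ioc] at ha; exact Int.toNat_of_nonneg (by omega)

variable {N}

lemma chordProd_eq_zero (hN : N ≠ 0) {z : ℤ} (hz : N ≤ z) : chordProd N z = 0 :=
  prod_eq_zero (mem_Ioc.mpr ⟨by omega, hz⟩) (chord_self hN)

lemma chordProd_mul_chordProd_sub (hN : N ≠ 0) {z : ℤ} (h0 : 0 ≤ z) (h1 : z ≤ N - 1) :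
    chordProd N z * chordProd N (N - 1 - z) = chordProd N (N - 1) := by
  have reflect : chordProd N (N - 1 - z) = ∏ j ∈ Ioc z (N - 1), chord N j := by
    refine prod_nbij' (fun j => N - j) (fun j => N - j) ?_ ?_ (fun _ _ => sub_sub_cancel _ _)
      (fun _ _ => sub_sub_cancel _ _) (fun j _ => (chord_self_sub hN j).symm)
    all_goals intro a ha; simp only [mem_Ioc] at ha ⊢; omega
  rw [reflect, chordProd_mul_prod_Ioc N h0 h1]

lemma qPoch_zeta_sq_self_sub_one (hN : N ≠ 0) : qPoch (zeta N ^ 2) (N - 1) = N := by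
  obtain ⟨n, rfl⟩ := Nat.exists_eq_succ_of_ne_zero hN
  rw [qPoch, Nat.succ_sub_one, (isPrimitiveRoot_zeta_sq hN).prod_one_sub_pow_eq_order]
  push_cast
  ring

lemma S_eq_zero_of_le (hN : N ≠ 0) {M : ℕ} (hM : N ≤ M) : S N M = 0 :=
  prod_eq_zero (mem_Icc.mpr ⟨Nat.one_le_iff_ne_zero.mpr hN, hM⟩) <| by
    rw [mul_div_cancel_right₀ _ (Nat.cast_ne_zero.mpr hN), Real.sin_pi, mul_zero]

lemma S_pos {M : ℕ} (hM : M < N) : 0 < S N M := by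
  refine prod_pos fun j hj => mul_pos two_pos (Real.sin_pos_of_pos_of_lt_pi ?_ ?_)
  all_goals obtain ⟨hj1, hj2⟩ := mem_Icc.mp hj
  · have : (0 : ℝ) < j := by exact_mod_cast hj1
    have : (0 : ℝ) < N := by exact_mod_cast Nat.zero_lt_of_lt hM
    positivity
  · have : (j : ℝ) < N := by exact_mod_cast hj2.trans_lt hM
    rw [div_lt_iff₀ (by linarith [(Nat.cast_nonneg j : (0 : ℝ) ≤ j)])]
    nlinarith [Real.pi_pos]

lemma prod_zeta_zpow {ι : Type*} (s : Finset ι) (f : ι → ℤ) :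
    ∏ i ∈ s, zeta N ^ f i = zeta N ^ ∑ i ∈ s, f i := by
  simp only [zeta_zpow, ← exp_sum, ← sum_mul, Int.cast_sum]

lemma zeta_sq_pow (j : ℕ) : (zeta N ^ 2) ^ j = zeta N ^ (2 * (j : ℤ)) := by
  rw [← pow_mul, ← zpow_natCast]; push_cast; rfl

lemma qPoch_mul_qPoch_eq_chordProd_mul_chordProd (m : ℕ) {k : ℤ} (hk1 : -(m : ℤ) ≤ k)
    (hk2 : k ≤ m) :
    qPoch (zeta N ^ 2) (m - k).toNat * qPoch (zeta N ^ 2) (m + k).toNat =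
      zeta N ^ ((m : ℤ) ^ 2 + k ^ 2 + m) * (chordProd N (m - k) * chordProd N (m + k)) := by
  obtain ⟨a, ha⟩ : ∃ a : ℕ, (a : ℤ) = m - k := ⟨(m - k).toNat, by omega⟩
  obtain ⟨b, hb⟩ : ∃ b : ℕ, (b : ℤ) = m + k := ⟨(m + k).toNat, by omega⟩
  have hexp :
      ((m : ℤ) ^ 2 + k ^ 2 + m) + (-((a + 1).choose 2 : ℤ) + -((b + 1).choose 2 : ℤ)) = 0 := by
    have hA := two_mul_choose_two (a + 1)
    have hB := two_mul_choose_two (b + 1)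
    push_cast at hA hB
    rw [ha] at hA
    rw [hb] at hB
    linarith
  have hsign : (-1 : ℂ) ^ a * (-1) ^ b = 1 := by
    rw [← pow_add, show a + b = 2 * m by omega, pow_mul]; norm_num
  have hphase : zeta N ^ ((m : ℤ) ^ 2 + k ^ 2 + m) *
      (zeta N ^ (-((a + 1).choose 2 : ℤ)) * zeta N ^ (-((b + 1).choose 2 : ℤ))) = 1 := by
    rw [← zeta_zpow_add, ← zeta_zpow_add, hexp, zpow_zero]
  rw [← ha, ← hb, Int.toNat_natCast, Int.toNat_natCast, chordProd_natCast, chordProd_natCast]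
  linear_combination (-((-1) ^ a * (-1) ^ b * qPoch (zeta N ^ 2) a * qPoch (zeta N ^ 2) b)) *
    hphase - qPoch (zeta N ^ 2) a * qPoch (zeta N ^ 2) b * hsign

theorem sum_zeta_zpow_mul_qBinom (m : ℕ) (l : ℤ) :
    ∑ k ∈ Icc (-(m : ℤ)) m,
        zeta N ^ ((m : ℤ) ^ 2 + k ^ 2 + m - 2 * k * l) *
          qBinom (zeta N ^ 2) (2 * m) (m + k).toNat =
      zeta N ^ (2 * (m : ℤ) ^ 2 + 2 * m * l + m) *
        ∏ j ∈ range (2 * m), (1 + zeta N ^ (1 - 2 * (m : ℤ) - 2 * l + 2 * j)) := by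
  have hx : ∀ j ∈ range (2 * m), 1 + zeta N ^ (1 - 2 * (m : ℤ) - 2 * l + 2 * j) =
      1 + zeta N ^ (1 - 2 * (m : ℤ) - 2 * l) * (zeta N ^ 2) ^ j := by
    intro j _; rw [zeta_sq_pow, ← zeta_zpow_add]
  rw [prod_congr rfl hx, prod_one_add_mul_pow_eq_sum_qBinom, mul_sum, sum_Icc_neg_eq_sum_range]
  refine sum_congr rfl fun j hj => ?_
  have hC := two_mul_choose_two j
  rw [show ((m : ℤ) + (j - m)).toNat = j by omega, zeta_sq_pow, ← zpow_natCast (zeta N ^ _),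
    ← zpow_mul, mul_comm _ (qBinom _ _ _)]
  calc qBinom (zeta N ^ 2) (2 * m) j * zeta N ^ ((m : ℤ) ^ 2 + (j - m) ^ 2 + m - 2 * (j - m) * l)
      = qBinom (zeta N ^ 2) (2 * m) j * zeta N ^ ((2 * (m : ℤ) ^ 2 + 2 * m * l + m) +
          (2 * ((j.choose 2 : ℕ) : ℤ) + (1 - 2 * (m : ℤ) - 2 * l) * j)) := by
        congr 2; linear_combination -hC
    _ = _ := by simp only [zeta_zpow_add]; ring

theorem prod_one_add_zeta_zpow (hN : N ≠ 0) (c : ℤ) (n : ℕ) :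
    ∏ j ∈ range n, (1 + zeta N ^ ((N : ℤ) - 2 * (c + n) + 2 * j)) =
      zeta N ^ (-(n * c + ((n + 1).choose 2 : ℤ))) * ∏ s ∈ Ioc c (c + n), chord N s := by
  have hsum : ∑ j ∈ range n, (-(c + n - j)) = -(n * c + ((n + 1).choose 2 : ℤ)) := by
    have hid : ∑ j ∈ range n, (j : ℤ) = (n.choose 2 : ℕ) := by
      rw [← Nat.cast_sum, sum_range_id, Nat.choose_two_right]
    have hC := two_mul_choose_two n
    simp only [neg_sub, sum_sub_distrib, sum_const, card_range, nsmul_eq_mul, hid,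
      Nat.choose_succ_succ', Nat.choose_one_right]
    push_cast
    linear_combination hC
  rw [prod_Ioc_eq_prod_range, ← hsum, ← prod_zeta_zpow, ← prod_mul_distrib]
  refine prod_congr rfl fun j _ => ?_
  rw [← one_add_zeta_zpow_self_sub hN]
  ring_nf

end Chords

lemma dft_add_const_mul (N : ℕ) (u v : ℤ → ℂ) (c : ℂ) (l : ℤ) :
    dft N (fun k => u k + c * v k) l = dft N u l + c * dft N v l := by
  simp only [dft, mul_add, sum_add_distrib, mul_sum]
  congr 1
  exact sum_congr rfl fun _ _ => by ring

section FourLPlusOne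

open Complex

variable (L : ℕ)

lemma chordProd_four_mul : chordProd (4 * L + 1) (4 * L) = 4 * L + 1 := by
  have hq := qPoch_zeta_sq_self_sub_one (N := 4 * L + 1) (by omega)
  have hexp : -(((4 * L + 1).choose 2 : ℕ) : ℤ) = ((4 * L + 1 : ℕ) : ℤ) * (-(2 * L : ℤ)) := by
    have hC := two_mul_choose_two (4 * L + 1)
    push_cast at hC ⊢
    linarith
  have h := chordProd_natCast (4 * L + 1) (4 * L)
  rw [Nat.add_sub_cancel] at hq
  rw [hexp, zeta_zpow_self_mul (by omega), hq, Even.neg_one_pow ⟨2 * L, by ring⟩,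
    Even.neg_one_zpow ⟨-L, by ring⟩] at h
  push_cast at h
  simpa using h

lemma chordProd_mul_chordProd_four_mul_sub {z : ℤ} (h0 : 0 ≤ z) (h1 : z ≤ 4 * L) :
    chordProd (4 * L + 1) z * chordProd (4 * L + 1) (4 * L - z) = 4 * L + 1 := by
  have h := chordProd_mul_chordProd_sub (N := 4 * L + 1) (by omega) h0 (by push_cast; omega)
  push_cast at h
  rwa [add_sub_cancel_right, chordProd_four_mul] at h

lemma chordProd_ne_zero {z : ℤ} (h0 : 0 ≤ z) (h1 : z ≤ 4 * L) : chordProd (4 * L + 1) z ≠ 0 :=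
  left_ne_zero_of_mul (a := chordProd (4 * L + 1) z) <| by
    rw [chordProd_mul_chordProd_four_mul_sub L h0 h1]
    exact_mod_cast (4 * L).succ_ne_zero

lemma qPoch_zeta_sq_ne_zero {M : ℕ} (hM : M ≤ 4 * L) : qPoch (zeta (4 * L + 1) ^ 2) M ≠ 0 :=
  right_ne_zero_of_mul (a := (-1) ^ M * _) <| by
    rw [← chordProd_natCast]
    exact chordProd_ne_zero L (Nat.cast_nonneg M) (by exact_mod_cast hM)

lemma S_mul_S_four_mul_sub {M : ℕ} (hM : M ≤ 4 * L) :
    S (4 * L + 1) M * S (4 * L + 1) (4 * L - M) = 4 * L + 1 := by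
  have hsign : (-I) ^ M * (-I) ^ (4 * L - M) = 1 := by
    rw [← pow_add, Nat.add_sub_cancel' hM, pow_mul, neg_pow, I_pow_four]; norm_num
  have h := chordProd_mul_chordProd_four_mul_sub L (Nat.cast_nonneg M) (by exact_mod_cast hM)
  apply ofReal_injective
  push_cast
  rw [S_eq_neg_I_pow_mul_chordProd, S_eq_neg_I_pow_mul_chordProd, Nat.cast_sub hM]
  push_cast
  linear_combination chordProd (4 * L + 1) M * chordProd (4 * L + 1) (4 * L - M) * hsign + h

lemma chordProd_mul_chordProd_mul_qPoch {m : ℕ} (hm : m ≤ 2 * L) {k : ℤ} (hk1 : -(m : ℤ) ≤ k)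
    (hk2 : k ≤ m) :
    chordProd (4 * L + 1) (4 * L - m + k) * chordProd (4 * L + 1) (4 * L - m - k) *
        qPoch (zeta (4 * L + 1) ^ 2) (2 * m) =
      (4 * L + 1) ^ 2 * (zeta (4 * L + 1) ^ ((m : ℤ) ^ 2 + k ^ 2 + m) *
        qBinom (zeta (4 * L + 1) ^ 2) (2 * m) (m + k).toNat) := by
  have r1 := chordProd_mul_chordProd_four_mul_sub L (z := 4 * L - m + k) (by omega) (by omega)
  have r2 := chordProd_mul_chordProd_four_mul_sub L (z := 4 * L - m - k) (by omega) (by omega)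
  rw [show 4 * (L : ℤ) - (4 * L - m + k) = m - k by ring] at r1
  rw [show 4 * (L : ℤ) - (4 * L - m - k) = m + k by ring] at r2
  have r3 := qPoch_mul_qPoch_eq_chordProd_mul_chordProd m hk1 hk2 (N := 4 * L + 1)
  have r4 := qBinom_mul_qPoch_mul_qPoch (zeta (4 * L + 1) ^ 2) (M := 2 * m) (k := (m + k).toNat)
    (by omega)
  rw [show 2 * m - (m + k).toNat = (m - k).toNat by omega] at r4
  set A := chordProd (4 * L + 1) (4 * L - m + k)
  set B := chordProd (4 * L + 1) (4 * L - m - k)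
  set Q := qBinom (zeta (4 * L + 1) ^ 2) (2 * m) (m + k).toNat
  set Z := zeta (4 * L + 1) ^ ((m : ℤ) ^ 2 + k ^ 2 + m)
  linear_combination -(A * B) * r4 + A * B * Q * r3
    + Z * Q * B * chordProd (4 * L + 1) (m + k) * r1 + Z * Q * (4 * L + 1) * r2

lemma qPoch_mul_sum_chordProd_mul_chordProd {m : ℕ} (hm : m ≤ 2 * L) (l : ℤ) :
    qPoch (zeta (4 * L + 1) ^ 2) (2 * m) *
        ∑ k ∈ Icc (-(2 * L : ℤ)) (2 * L), zeta (4 * L + 1) ^ (-(2 * k * l)) *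
          (chordProd (4 * L + 1) (4 * L - m + k) * chordProd (4 * L + 1) (4 * L - m - k)) =
      (4 * L + 1) ^ 2 * (zeta (4 * L + 1) ^ (2 * (m : ℤ) ^ 2 - 4 * L * m) *
        ∏ s ∈ Ioc (2 * L + l - m) (2 * L + l + m), chord (4 * L + 1) s) := by
  have hsupp : ∑ k ∈ Icc (-(2 * L : ℤ)) (2 * L), zeta (4 * L + 1) ^ (-(2 * k * l)) *
      (chordProd (4 * L + 1) (4 * L - m + k) * chordProd (4 * L + 1) (4 * L - m - k)) =
      ∑ k ∈ Icc (-(m : ℤ)) m, zeta (4 * L + 1) ^ (-(2 * k * l)) *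
        (chordProd (4 * L + 1) (4 * L - m + k) * chordProd (4 * L + 1) (4 * L - m - k)) := by
    refine (sum_subset (fun k hk => ?_) fun k hk hk' => ?_).symm
    · simp only [mem_Icc] at hk ⊢; omega
    · simp only [mem_Icc] at hk hk'
      rcases lt_or_gt_of_ne (show k ≠ 0 by omega) with hneg | hpos
      · rw [chordProd_eq_zero (by omega) (z := 4 * L - m - k) (by push_cast; omega), mul_zero,
          mul_zero]
      · rw [chordProd_eq_zero (by omega) (z := 4 * L - m + k) (by push_cast; omega), zero_mul,
          mul_zero]
  have hterm : ∀ k ∈ Icc (-(m : ℤ)) m, qPoch (zeta (4 * L + 1) ^ 2) (2 * m) *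
      (zeta (4 * L + 1) ^ (-(2 * k * l)) *
        (chordProd (4 * L + 1) (4 * L - m + k) * chordProd (4 * L + 1) (4 * L - m - k))) =
      (4 * L + 1) ^ 2 * (zeta (4 * L + 1) ^ ((m : ℤ) ^ 2 + k ^ 2 + m - 2 * k * l) *
        qBinom (zeta (4 * L + 1) ^ 2) (2 * m) (m + k).toNat) := by
    intro k hk
    obtain ⟨hk1, hk2⟩ := mem_Icc.mp hk
    rw [sub_eq_add_neg _ (2 * k * l), zeta_zpow_add]
    linear_combination zeta (4 * L + 1) ^ (-(2 * k * l)) *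
      chordProd_mul_chordProd_mul_qPoch L hm hk1 hk2
  have hprod : ∀ j ∈ range (2 * m), 1 + zeta (4 * L + 1) ^ (1 - 2 * (m : ℤ) - 2 * l + 2 * j) =
      1 + zeta (4 * L + 1) ^
        (((4 * L + 1 : ℕ) : ℤ) - 2 * ((2 * L + l - m) + (2 * m : ℕ)) + 2 * j) := by
    intro j _; push_cast; ring_nf
  have hexp : 2 * (m : ℤ) ^ 2 + 2 * m * l + m +
      -(((2 * m : ℕ) : ℤ) * (2 * L + l - m) + ((2 * m + 1).choose 2 : ℕ)) =
        2 * (m : ℤ) ^ 2 - 4 * L * m := by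
    have hC := two_mul_choose_two (2 * m + 1)
    push_cast at hC ⊢
    linarith
  rw [hsupp, mul_sum, sum_congr rfl hterm, ← mul_sum, sum_zeta_zpow_mul_qBinom,
    prod_congr rfl hprod, prod_one_add_zeta_zpow (by omega), ← hexp,
    zeta_zpow_add (4 * L + 1) (2 * (m : ℤ) ^ 2 + 2 * m * l + m),
    show 2 * L + l - m + ((2 * m : ℕ) : ℤ) = 2 * L + l + m by push_cast; ring]
  ring

theorem sum_zeta_zpow_mul_chordProd_mul_chordProd {m : ℕ} (hm : m ≤ 2 * L) {l : ℤ}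
    (hl1 : -(2 * L : ℤ) ≤ l) (hl2 : l ≤ 2 * L) :
    ∑ k ∈ Icc (-(2 * L : ℤ)) (2 * L), zeta (4 * L + 1) ^ (-(2 * k * l)) *
        (chordProd (4 * L + 1) (4 * L - m + k) * chordProd (4 * L + 1) (4 * L - m - k)) =
      (-1) ^ m * chordProd (4 * L + 1) (4 * L - 2 * m) *
        (chordProd (4 * L + 1) (2 * L + m + l) * chordProd (4 * L + 1) (2 * L + m - l)) := by
  apply mul_left_cancel₀ (qPoch_zeta_sq_ne_zero L (M := 2 * m) (by omega))
  rw [qPoch_mul_sum_chordProd_mul_chordProd L hm l]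
  by_cases hc : 0 ≤ 2 * (L : ℤ) + l - m
  · apply mul_left_cancel₀ (chordProd_ne_zero L hc (by omega))
    have hprod := chordProd_mul_prod_Ioc (4 * L + 1) hc (b := 2 * L + l + m) (by omega)
    have hrefl1 := chordProd_mul_chordProd_four_mul_sub L (z := 2 * m) (by omega) (by omega)
    have hrefl2 := chordProd_mul_chordProd_four_mul_sub L hc (by omega)
    rw [show 4 * (L : ℤ) - (2 * L + l - m) = 2 * L + m - l by ring] at hrefl2
    have hC := two_mul_choose_two (2 * m + 1)
    push_cast at hC
    have hpoch : qPoch (zeta (4 * L + 1) ^ 2) (2 * m) =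
        zeta (4 * L + 1) ^ (((2 * m + 1).choose 2 : ℕ) : ℤ) * chordProd (4 * L + 1) (2 * m) := by
      have h := chordProd_natCast (4 * L + 1) (2 * m)
      rw [Even.neg_one_pow ⟨m, two_mul m⟩, one_mul] at h
      push_cast at h
      rw [h, ← mul_assoc, ← zeta_zpow_add, add_neg_cancel, zpow_zero, one_mul]
    have hphase : zeta (4 * L + 1) ^ (2 * (m : ℤ) ^ 2 - 4 * L * m) =
        (-1) ^ m * zeta (4 * L + 1) ^ (((2 * m + 1).choose 2 : ℕ) : ℤ) := by
      rw [show 2 * (m : ℤ) ^ 2 - 4 * L * m =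
            ((4 * L + 1 : ℕ) : ℤ) * (-m) + ((2 * m + 1).choose 2 : ℕ) by push_cast; linarith,
        zeta_zpow_add, zeta_zpow_self_mul (by omega), zpow_neg, zpow_natCast, ← inv_pow, inv_neg,
        inv_one]
    rw [show 2 * (L : ℤ) + m + l = 2 * L + l + m by ring]
    set T := chordProd (4 * L + 1)
    set W := zeta (4 * L + 1) ^ (((2 * m + 1).choose 2 : ℕ) : ℤ)
    linear_combination
      (4 * (L : ℂ) + 1) ^ 2 * zeta (4 * L + 1) ^ (2 * (m : ℤ) ^ 2 - 4 * L * m) * hprod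
      - T (2 * L + l - m) * (-1) ^ m * T (4 * L - 2 * m) * T (2 * L + l + m) * T (2 * L + m - l)
        * hpoch
      + (4 * (L : ℂ) + 1) ^ 2 * T (2 * L + l + m) * hphase
      - T (2 * L + l - m) * W * (-1) ^ m * T (2 * L + l + m) * T (2 * L + m - l) * hrefl1
      - W * (-1) ^ m * T (2 * L + l + m) * (4 * (L : ℂ) + 1) * hrefl2
  · rw [prod_eq_zero (i := 0) (by simp only [mem_Ioc]; omega) (chord_zero _),
      chordProd_eq_zero (z := 2 * L + m - l) (by omega) (by push_cast; omega)]
    ring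

lemma Iset_four_mul_add_one : Iset (4 * L + 1) = Icc (-(2 * L : ℤ)) (2 * L) := by
  rw [Iset, show (4 * L + 1 + 1) / 2 = 2 * L + 1 by omega]
  push_cast
  congr 1 <;> ring

lemma uvec_eq_chordProd {n k : ℤ} (hk1 : -(3 * L + n) ≤ k) (hk2 : k ≤ 3 * L + n) :
    (uvec L n k : ℂ) = (-1) ^ (3 * L + n) *
      (chordProd (4 * L + 1) (3 * L + n + k) * chordProd (4 * L + 1) (3 * L + n - k)) := by
  obtain ⟨p, hp⟩ : ∃ p : ℕ, (p : ℤ) = 3 * L + n := ⟨_, Int.toNat_of_nonneg (by omega)⟩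
  have hsign : (-I) ^ (3 * L + n + k).toNat * (-I) ^ (3 * L + n - k).toNat = (-1) ^ p := by
    rw [← pow_add, show (3 * L + n + k).toNat + (3 * L + n - k).toNat = 2 * p by omega, pow_mul,
      neg_sq, I_sq]
  rw [show (-1 : ℂ) ^ (3 * L + n) = (-1) ^ p by rw [← hp, zpow_natCast], ← hsign, uvec,
    ofReal_mul, S_eq_neg_I_pow_mul_chordProd, S_eq_neg_I_pow_mul_chordProd,
    Int.toNat_of_nonneg (by omega), Int.toNat_of_nonneg (by omega)]
  ring

theorem dft_uvec {n : ℤ} (hn1 : -(L : ℤ) ≤ n) (hn2 : n ≤ L) {l : ℤ} (hl : l ∈ Iset (4 * L + 1)) :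
    dft (4 * L + 1) (fun k => (uvec L n k : ℂ)) l =
      (Real.sqrt (4 * L + 1 : ℕ) : ℂ)⁻¹ *
        (S (4 * L + 1) (2 * L + 2 * n).toNat * uvec L (-n) l) := by
  obtain ⟨hl1, hl2⟩ := mem_Icc.mp (Iset_four_mul_add_one L ▸ hl)
  obtain ⟨m, hm⟩ : ∃ m : ℕ, (m : ℤ) = L - n := ⟨_, Int.toNat_of_nonneg (by omega)⟩
  have hterm : ∀ k ∈ Icc (-(2 * L : ℤ)) (2 * L),
      exp (-2 * π * I * k * l / (4 * L + 1 : ℕ)) * uvec L n k = (-1) ^ (3 * L + n) *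
        (zeta (4 * L + 1) ^ (-(2 * k * l)) *
          (chordProd (4 * L + 1) (4 * L - m + k) * chordProd (4 * L + 1) (4 * L - m - k))) := by
    intro k hk
    obtain ⟨hk1, hk2⟩ := mem_Icc.mp hk
    rw [exp_eq_zeta_zpow, uvec_eq_chordProd L (by omega) (by omega),
      show 3 * (L : ℤ) + n = 4 * L - m by omega]
    ring
  have hS : (S (4 * L + 1) (2 * L + 2 * n).toNat : ℂ) =
      (-1) ^ (2 * L - m : ℤ) * chordProd (4 * L + 1) (4 * L - 2 * m) := by
    obtain ⟨q, hq⟩ : ∃ q : ℕ, (q : ℤ) = 2 * L - m := ⟨_, Int.toNat_of_nonneg (by omega)⟩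
    rw [S_eq_neg_I_pow_mul_chordProd, show (2 * L + 2 * n).toNat = 2 * q by omega, pow_mul,
      neg_sq, I_sq, show ((2 * q : ℕ) : ℤ) = 4 * L - 2 * m by omega, ← hq, zpow_natCast]
  have hsign :
      ((-1 : ℂ) ^ (3 * L + n)) * (-1) ^ m = (-1) ^ (2 * L - m : ℤ) * (-1) ^ (2 * L + m : ℤ) := by
    rw [← zpow_natCast, ← zpow_add₀ (by norm_num), ← zpow_add₀ (by norm_num),
      Even.neg_one_zpow ⟨2 * L, by omega⟩, Even.neg_one_zpow ⟨2 * L, by omega⟩]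
  rw [dft, Iset_four_mul_add_one, sum_congr rfl hterm, ← mul_sum,
    sum_zeta_zpow_mul_chordProd_mul_chordProd L (by omega) hl1 hl2, hS,
    uvec_eq_chordProd L (by omega) (by omega), show 3 * (L : ℤ) + -n = 2 * L + m by omega]
  linear_combination (Real.sqrt (4 * L + 1 : ℕ) : ℂ)⁻¹ * chordProd (4 * L + 1) (4 * L - 2 * m) *
    (chordProd (4 * L + 1) (2 * L + m + l) * chordProd (4 * L + 1) (2 * L + m - l)) * hsign

theorem dft_wvec {n : ℤ} (hn1 : -(L : ℤ) ≤ n) (hn2 : n ≤ L) {l : ℤ} (hl : l ∈ Iset (4 * L + 1)) :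
    dft (4 * L + 1) (fun k => (wvec L n k : ℂ)) l = wvec L n l := by
  set c := (Real.sqrt (4 * L + 1))⁻¹ * S (4 * L + 1) (2 * L + 2 * n).toNat
  have hsqrt : Real.sqrt (4 * L + 1 : ℕ) = Real.sqrt (4 * L + 1) := by push_cast; rfl
  have hnorm : c * ((Real.sqrt (4 * L + 1))⁻¹ * S (4 * L + 1) (2 * L + 2 * -n).toNat) = 1 := by
    have hS := S_mul_S_four_mul_sub L (M := (2 * L + 2 * n).toNat) (by omega)
    have hsq : Real.sqrt (4 * L + 1) ^ 2 = 4 * L + 1 := Real.sq_sqrt (by positivity)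
    have hpos : 0 < Real.sqrt (4 * L + 1) := Real.sqrt_pos.mpr (by positivity)
    rw [show (2 * L + 2 * -n).toNat = 4 * L - (2 * L + 2 * n).toNat by omega]
    simp only [c]
    field_simp
    linear_combination hS - hsq
  have hw : (fun k => (wvec L n k : ℂ)) = fun k => (uvec L n k : ℂ) + c * uvec L (-n) k := by
    funext k; push_cast [wvec, c]; rfl
  rw [hw, dft_add_const_mul, dft_uvec L hn1 hn2 hl, dft_uvec L (by omega) (by omega) hl, neg_neg,
    hsqrt, wvec]
  have hnormC := congrArg ofReal hnorm
  push_cast at hnormC ⊢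
  linear_combination (uvec L n l : ℂ) * hnormC

lemma wvec_eq_zero {i j : ℕ} (hji : j < i) : wvec L j (L + i) = 0 := by
  rw [wvec, uvec, uvec,
    S_eq_zero_of_le (4 * L).succ_ne_zero (M := (3 * L + j + (L + i) : ℤ).toNat) (by omega),
    S_eq_zero_of_le (4 * L).succ_ne_zero (M := (3 * L + -j + (L + i) : ℤ).toNat) (by omega)]
  ring

lemma wvec_pos {i : ℕ} (hi : i ≤ L) : 0 < wvec L i (L + i) := by
  have hS : ∀ z : ℤ, z ≤ 4 * L → 0 < S (4 * L + 1) z.toNat := fun z hz => S_pos (by omega)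
  have hu : 0 ≤ uvec L i (L + i) := by
    rcases Nat.eq_zero_or_pos i with rfl | hi0
    · exact (mul_pos (hS _ (by omega)) (hS _ (by omega))).le
    · rw [uvec, S_eq_zero_of_le (4 * L).succ_ne_zero (M := (3 * L + i + (L + i) : ℤ).toNat)
        (by omega), zero_mul]
  have hc : 0 < (Real.sqrt (4 * L + 1))⁻¹ := inv_pos.mpr (Real.sqrt_pos.mpr (by positivity))
  exact add_pos_of_nonneg_of_pos hu
    (mul_pos (mul_pos hc (hS _ (by omega))) (mul_pos (hS _ (by omega)) (hS _ (by omega))))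

end FourLPlusOne

theorem linearIndependent_of_apply_eq_zero_of_lt {ι X R : Type*} [Fintype ι] [LinearOrder ι]
    [CommRing R] [NoZeroDivisors R] (v : ι → X → R) (p : ι → X)
    (hzero : ∀ i j, j < i → v j (p i) = 0) (hdiag : ∀ i, v i (p i) ≠ 0) :
    LinearIndependent R v := by
  rw [Fintype.linearIndependent_iff]
  intro g hg i
  induction i using WellFoundedGT.induction with
  | _ i ih =>
    have h := congrFun hg (p i)
    simp only [Finset.sum_apply, Pi.smul_apply, smul_eq_mul, Pi.zero_apply] at h
    rw [sum_eq_single i (fun j _ hji => ?_) (by simp)] at h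
    · exact (mul_eq_zero.mp h).resolve_right (hdiag i)
    · rcases lt_or_gt_of_ne hji with hlt | hgt
      · rw [hzero i j hlt, mul_zero]
      · rw [ih j hgt, zero_mul]

end CenteredDFT

open CenteredDFT

theorem stmt14_general (L : ℕ) :
    (∀ n : ℤ, 0 ≤ n → n ≤ L → ∀ l ∈ Iset (4 * L + 1),
        dft (4 * L + 1) (fun k => (wvec L n k : ℂ)) l = (wvec L n l : ℂ)) ∧
    LinearIndependent ℝ (fun n : Fin (L + 1) =>
      (fun k : {k : ℤ // k ∈ Iset (4 * L + 1)} => wvec L (n : ℤ) k.1)) ∧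
    L + 1 ≤ Module.finrank ℂ (Module.End.eigenspace (Fop (4 * L + 1)) 1) := by
  let p (i : Fin (L + 1)) : {k : ℤ // k ∈ Iset (4 * L + 1)} :=
    ⟨L + i, by rw [Iset_four_mul_add_one, mem_Icc]; omega⟩
  have hzero (i j : Fin (L + 1)) (hji : j < i) : wvec L j (p i).1 = 0 := wvec_eq_zero L hji
  have hdiag (i : Fin (L + 1)) : wvec L i (p i).1 ≠ 0 :=
    (wvec_pos L (Nat.lt_succ_iff.mp i.2)).ne'
  let w (n : Fin (L + 1)) (k : {k : ℤ // k ∈ Iset (4 * L + 1)}) : ℂ := wvec L n k.1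
  have hw : LinearIndependent ℂ w := linearIndependent_of_apply_eq_zero_of_lt w p
    (fun i j hji => by simp [w, hzero i j hji]) (fun i => by simpa [w] using hdiag i)
  have hwF : Set.range w ⊆ Module.End.eigenspace (Fop (4 * L + 1)) 1 := by
    rintro _ ⟨n, rfl⟩
    rw [SetLike.mem_coe, Module.End.mem_eigenspace_iff, one_smul]
    funext l
    calc Fop (4 * L + 1) (w n) l = dft (4 * L + 1) (fun k => (wvec L n k : ℂ)) l := by
          rw [dft, ← sum_coe_sort]; rfl
      _ = w n l := dft_wvec L (by omega) (by have := n.2; omega) l.2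
  refine ⟨fun n hn0 hnL l hl => dft_wvec L (by omega) hnL hl,
    linearIndependent_of_apply_eq_zero_of_lt _ p hzero hdiag, ?_⟩
  calc L + 1 = Module.finrank ℂ (Submodule.span ℂ (Set.range w)) := by
        rw [finrank_span_eq_card hw, Fintype.card_fin]
    _ ≤ _ := Submodule.finrank_mono (Submodule.span_le.mpr hwF)

theorem stmt14 (L : ℕ) (hL : 1 ≤ L) :
    (∀ n : ℤ, 0 ≤ n → n ≤ L → ∀ l ∈ Iset (4 * L + 1),
        dft (4 * L + 1) (fun k => (wvec L n k : ℂ)) l = (wvec L n l : ℂ)) ∧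
    LinearIndependent ℝ (fun n : Fin (L + 1) =>
      (fun k : {k : ℤ // k ∈ Iset (4 * L + 1)} => wvec L (n : ℤ) k.1)) ∧
    L + 1 ≤ Module.finrank ℂ (Module.End.eigenspace (Fop (4 * L + 1)) 1) :=
  stmt14_general L
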